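/- arXiv:1709.09985 — 3 statements merged into one kernel-verified Lean document; each statement's English description precedes it below -/
import Mathlib

section
/- Let G be a finite simple graph, R a graph possibly with loops on K nodes, and (V_u)_{u∈V(R)} a partition of V(G). Then there exist subsets S₁, …, S_t of V(G) with t ≤ K + K(K−1)/2 such that G^R is obtained from G by successively complementing on S₁, then S₂, …, then S_t. -/
/-- The graph `G^R`: given a graph `R` possibly with loops on a node type `ι`
(presented as a relation) and a partition of `V(G)` indexed by the nodes of `R`
(presented as `p : V → ι`, the part `V_u` being `p ⁻¹' {u}`), two distinct
vertices are adjacent in `G^R` iff exactly one of the following holds: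
they are adjacent in `G`, or their parts are adjacent in `R`. -/
def SimpleGraph.patternApply {V ι : Type*} (G : SimpleGraph V) (R : ι → ι → Prop)
    (p : V → ι) : SimpleGraph V where
  Adj v w := v ≠ w ∧ Xor' (G.Adj v w) (R (p v) (p w) ∨ R (p w) (p v))
  symm := ⟨by
    rintro v w ⟨h1, h2⟩
    refine ⟨h1.symm, ?_⟩
    rwa [G.adj_comm, or_comm] at h2⟩
  loopless := ⟨fun v h => h.1 rfl⟩

/-- A pattern: a graph possibly with loops (a symmetric relation on nodes) with
no pair of adjacent twins both having loops and no pair of non-adjacent twins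
neither of which has a loop. -/
def IsPattern {ι : Type*} (R : ι → ι → Prop) : Prop :=
  Symmetric R ∧ ∀ u₁ u₂ : ι, u₁ ≠ u₂ →
    (∀ w : ι, w ≠ u₁ → w ≠ u₂ → (R u₁ w ↔ R u₂ w)) →
    ¬((R u₁ u₂ ∧ R u₁ u₁ ∧ R u₂ u₂) ∨ (¬R u₁ u₂ ∧ ¬R u₁ u₁ ∧ ¬R u₂ u₂))

/-- `G` is `d`-degenerate: the vertices can be linearly ordered (via an injection
into `ℕ`) so that every vertex has at most `d` neighbors preceding it. -/
def SimpleGraph.Degenerate {V : Type*} (G : SimpleGraph V) (d : ℕ) : Prop :=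
  ∃ f : V → ℕ, Function.Injective f ∧ ∀ v : V, {w : V | G.Adj v w ∧ f w < f v}.ncard ≤ d

/-- Two sets of vertices are `k`-similar if their symmetric difference has at
most `k` elements. -/
def KSimilar {V : Type*} (k : ℕ) (X Y : Set V) : Prop := (symmDiff X Y).ncard ≤ k

/-- The `k`-similarity graph of `H`: two distinct vertices are adjacent iff
their neighborhoods are `k`-similar. -/
def simGraph {V : Type*} (H : SimpleGraph V) (k : ℕ) : SimpleGraph V where
  Adj v w := v ≠ w ∧ KSimilar k (H.neighborSet v) (H.neighborSet w)
  symm := ⟨by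
    rintro v w ⟨h1, h2⟩
    exact ⟨h1.symm, by rwa [KSimilar, symmDiff_comm]⟩⟩
  loopless := ⟨fun v h => h.1 rfl⟩

/-- The `u`-perfect set: the union of the parts `V_{u'}` over all neighbors
`u'` of `u` in `R`. -/
def perfectSet {V ι : Type*} (R : ι → ι → Prop) (p : V → ι) (u : ι) : Set V :=
  {v : V | R u (p v)}

/-- A vertex `v` is `(u,k)`-perfect if its neighborhood in `G^R` is `k`-similar
to the `u`-perfect set. -/
def PerfectVtx {V ι : Type*} (G : SimpleGraph V) (R : ι → ι → Prop) (p : V → ι)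
    (u : ι) (k : ℕ) (v : V) : Prop :=
  KSimilar k ((G.patternApply R p).neighborSet v) (perfectSet R p u)

/-- Complementing a graph on a subset `S` of its vertices: adjacency between
distinct vertices of `S` is flipped, all other adjacencies are unchanged. -/
def complementOn {V : Type*} (G : SimpleGraph V) (S : Set V) : SimpleGraph V where
  Adj v w := v ≠ w ∧ Xor' (G.Adj v w) (v ∈ S ∧ w ∈ S)
  symm := ⟨by
    rintro v w ⟨h1, h2⟩
    refine ⟨h1.symm, ?_⟩
    rwa [G.adj_comm, and_comm] at h2⟩
  loopless := ⟨fun v h => h.1 rfl⟩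

/-!
Complementing on a set `S` flips exactly the pairs inside `S`, so a sequence of complementations
flips a pair `v, w` iff an odd number of the sets contain both. Taking `S = V_u ∪ V_{u'}` for every
edge `uu'` of `R` with `u ≠ u'` flips the pairs between `V_u` and `V_{u'}` as required, and flips
the pairs inside `V_u` once per such edge at `u`; complementing on `V_u` alone then fixes the
parity inside `V_u`. Each set is indexed by an element of `Sym2 ι` (`s(u, u')` or `s(u, u)`), of
which there are `K + K(K-1)/2`.
-/

open Finset

theorem Finset.countP_toList {α : Type*} (s : Finset α) (q : α → Prop) [DecidablePred q] :
    s.toList.countP (fun x => q x) = #{x ∈ s | q x} := by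
  rw [← Multiset.coe_countP, coe_toList, Multiset.countP_eq_card_filter]
  rfl

theorem Sym2.card_eq_add {α : Type*} [Fintype α] :
    Fintype.card (Sym2 α) = Fintype.card α + Fintype.card α * (Fintype.card α - 1) / 2 := by
  rw [Sym2.card, Nat.choose_succ_succ, Nat.choose_one_right, Nat.choose_two_right]

open Classical in
theorem adj_foldl_complementOn {V : Type*} (G : SimpleGraph V) (L : List (Set V)) (v w : V) :
    (L.foldl complementOn G).Adj v w ↔
      v ≠ w ∧ Xor (G.Adj v w) (Odd (L.countP fun S => v ∈ S ∧ w ∈ S)) := by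
  induction L generalizing G with
  | nil => simpa [Xor] using G.ne_of_adj
  | cons S L ih =>
    rw [List.foldl_cons, ih, List.countP_cons]
    change (v ≠ w ∧ Xor (v ≠ w ∧ Xor (G.Adj v w) (v ∈ S ∧ w ∈ S)) _) ↔ _
    by_cases h : v ∈ S ∧ w ∈ S
    · rw [if_pos (decide_eq_true h), Nat.odd_add_one]
      unfold Xor; tauto
    · rw [if_neg (by simpa using h), add_zero]
      unfold Xor; tauto

open Classical in
theorem Std.Symm.exists_finset_sym2_odd_card_iff {α : Type*} [Fintype α] {r : α → α → Prop}
    (hr : Std.Symm r) :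
    ∃ P : Finset (Sym2 α), ∀ a b, Odd #{e ∈ P | a ∈ e ∧ b ∈ e} ↔ r a b := by
  let E : Finset (Sym2 α) := {e | ¬e.IsDiag ∧ e ∈ Sym2.fromRel hr}
  let D : Finset α := {a | Xor (Odd #{e ∈ E | a ∈ e}) (r a a)}
  let δ : α ↪ Sym2 α := ⟨Sym2.diag, Sym2.diag_injective⟩
  refine ⟨E ∪ D.map δ, fun a b => ?_⟩
  rcases eq_or_ne a b with rfl | hab
  · have hdisj : Disjoint E (D.map δ) := by
      simp only [disjoint_left, mem_map]
      rintro _ he ⟨d, -, rfl⟩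
      exact (mem_filter.1 he).2.1 (Sym2.diag_isDiag d)
    have hloop : #{e ∈ D.map δ | a ∈ e} = if a ∈ D then 1 else 0 := by
      rw [filter_map, card_map]
      split_ifs with ha <;> simp [δ, Function.comp_def, Sym2.diag, filter_eq, ha]
    simp_rw [and_self, filter_union, card_union_of_disjoint (disjoint_filter_filter hdisj), hloop]
    by_cases ha : a ∈ D
    · rw [if_pos ha, Nat.odd_add_one]
      simp only [D, mem_filter, mem_univ, true_and] at ha
      unfold Xor at ha; tauto
    · rw [if_neg ha, add_zero]
      simp only [D, mem_filter, mem_univ, true_and] at ha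
      unfold Xor at ha; tauto
  · have hmem : s(a, b) ∈ E ∪ D.map δ ↔ r a b := by
      have hoff (d : α) : δ d ≠ s(a, b) := fun h =>
        hab (Sym2.mk_isDiag_iff.1 (h ▸ Sym2.diag_isDiag d))
      simp [E, hab, Sym2.fromRel_prop, hoff]
    rw [filter_congr fun e _ => Sym2.mem_and_mem_iff hab, filter_eq']
    by_cases h : r a b <;> simp [hmem, h]

open Classical in
theorem Std.Symm.exists_list_odd_countP_iff {α : Type*} [Fintype α] {r : α → α → Prop}
    (hr : Std.Symm r) : ∃ L : List (Set α), L.length ≤ Fintype.card (Sym2 α) ∧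
      ∀ a b, Odd (L.countP fun S => a ∈ S ∧ b ∈ S) ↔ r a b := by
  obtain ⟨P, hP⟩ := hr.exists_finset_sym2_odd_card_iff
  refine ⟨P.toList.map fun e => {x | x ∈ e}, by simpa using card_le_univ P, fun a b => ?_⟩
  rw [List.countP_map, ← hP a b, ← countP_toList]
  simp [Function.comp_def]

theorem stmt10_general {V ι : Type*} [Fintype ι] (K : ℕ) (hK : Fintype.card ι = K)
    (G : SimpleGraph V) (R : ι → ι → Prop) (p : V → ι) :
    ∃ L : List (Set V), L.length ≤ K + K * (K - 1) / 2 ∧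
      L.foldl complementOn G = G.patternApply R p := by
  obtain ⟨L, hlen, hL⟩ :=
    Std.Symm.exists_list_odd_countP_iff (r := fun a b => R a b ∨ R b a) ⟨fun _ _ => Or.symm⟩
  refine ⟨L.map (p ⁻¹' ·), ?_, ?_⟩
  · rw [List.length_map, ← hK, ← Sym2.card_eq_add]
    exact hlen
  · ext v w
    rw [adj_foldl_complementOn, List.countP_map]
    exact and_congr_right fun _ => by rw [← hL (p v) (p w)]; rfl

/-- if `R` has `K` nodes, then `G^R` can be obtained from `G` by
successively complementing on at most `K + K(K−1)/2` subsets of `V(G)`. -/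
theorem stmt10 {V ι : Type*} [Fintype V] [Fintype ι] (K : ℕ) (hK : Fintype.card ι = K)
    (G : SimpleGraph V) (R : ι → ι → Prop) (hR : Symmetric R) (p : V → ι) :
    ∃ L : List (Set V), L.length ≤ K + K * (K - 1) / 2 ∧
      L.foldl complementOn G = G.patternApply R p :=
  stmt10_general K hK G R p
end

section
/- Let H be a finite simple graph obtained from a finite simple graph G by successively complementing on k subsets S₁, …, S_k of the vertex set of G. Then there exist a pattern R with at most 2^k nodes and a partition (V_u)_{u∈V(R)} of V(G) such that H = G^R. -/
/-! Record each vertex `v` by its membership vector `χ v ∈ 𝔽₂^k`, with `(χ v)ᵢ = 1` iff `v ∈ Sᵢ`.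
The adjacency of `v ≠ w` is flipped once for every `i` with `v, w ∈ Sᵢ`, so `v, w` are adjacent in
`H` iff exactly one of `G.Adj v w` and `χ v ⬝ᵥ χ w = 1` holds: `H = G^R` for the graph `R` on `𝔽₂^k`
with `u ~ w` iff `u ⬝ᵥ w = 1`, the parts being the fibres of `χ`. Two twins `u₁ ≠ u₂` of `R` that
are both looped and adjacent, or both unlooped and non-adjacent, would have the same dot product
with every vector, which is impossible as the dot product is nondegenerate; so `R` is a pattern. -/

lemma ZMod.two_eq_of_eq_one_iff {a b : ZMod 2} (h : a = 1 ↔ b = 1) : a = b := by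
  revert a b; decide

lemma ZMod.xor_eq_one_iff_add_eq_one (a b : ZMod 2) : Xor (a = 1) (b = 1) ↔ a + b = 1 := by
  revert a b; decide

lemma isPattern_dotProduct_eq_one (ι : Type*) [Fintype ι] [DecidableEq ι] :
    IsPattern fun u w : ι → ZMod 2 => u ⬝ᵥ w = 1 := by
  refine ⟨fun u w (h : u ⬝ᵥ w = 1) => (dotProduct_comm w u).trans h,
    fun u₁ u₂ hne htwin hloops => hne ?_⟩
  have h₁₁ : u₁ ⬝ᵥ u₂ = u₁ ⬝ᵥ u₁ := ZMod.two_eq_of_eq_one_iff (by tauto)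
  have h₂₂ : u₁ ⬝ᵥ u₂ = u₂ ⬝ᵥ u₂ := ZMod.two_eq_of_eq_one_iff (by tauto)
  have hdot : ∀ w, u₁ ⬝ᵥ w = u₂ ⬝ᵥ w := by
    intro w
    by_cases hw₁ : w = u₁
    · rw [hw₁, ← h₁₁, dotProduct_comm]
    by_cases hw₂ : w = u₂
    · rwa [hw₂]
    exact ZMod.two_eq_of_eq_one_iff (htwin w hw₁ hw₂)
  funext i
  simpa [dotProduct_single] using hdot (Pi.single i 1)

lemma IsPattern.comap {ι κ : Type*} {R : ι → ι → Prop} (hR : IsPattern R) (e : κ ≃ ι) :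
    IsPattern fun a b => R (e a) (e b) := by
  refine ⟨fun a b h => hR.1 h, fun a b hne htwin => hR.2 (e a) (e b) (e.injective.ne hne) ?_⟩
  intro w hw₁ hw₂
  simpa using htwin (e.symm w) (by rintro rfl; simp at hw₁) (by rintro rfl; simp at hw₂)

lemma SimpleGraph.patternApply_comap {V ι κ : Type*} (G : SimpleGraph V) (R : ι → ι → Prop)
    (p : V → ι) (e : κ ≃ ι) :
    G.patternApply (fun a b => R (e a) (e b)) (e.symm ∘ p) = G.patternApply R p := by
  ext v w
  simp [SimpleGraph.patternApply]

lemma SimpleGraph.patternApply_adj {V ι : Type*} {G : SimpleGraph V} {R : ι → ι → Prop}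
    (hR : ∀ a b, R a b → R b a) {p : V → ι} {v w : V} :
    (G.patternApply R p).Adj v w ↔ v ≠ w ∧ Xor (G.Adj v w) (R (p v) (p w)) := by
  change v ≠ w ∧ Xor _ (_ ∨ _) ↔ _
  rw [or_iff_left_of_imp (hR _ _)]

lemma complementOn_adj {V : Type*} {G : SimpleGraph V} {S : Set V} {v w : V} :
    (complementOn G S).Adj v w ↔ v ≠ w ∧ Xor (G.Adj v w) (v ∈ S ∧ w ∈ S) := Iff.rfl

noncomputable def membershipVector {V : Type*} (L : List (Set V)) (v : V) :
    Fin L.length → ZMod 2 :=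
  fun i => L[i].indicator 1 v

lemma membershipVector_cons_dotProduct {V : Type*} (S : Set V) (L : List (Set V)) (v w : V) :
    membershipVector (S :: L) v ⬝ᵥ membershipVector (S :: L) w =
      S.indicator 1 v * S.indicator 1 w + membershipVector L v ⬝ᵥ membershipVector L w := by
  simp [dotProduct, membershipVector, Fin.sum_univ_succ]

lemma foldl_complementOn_adj {V : Type*} (L : List (Set V)) (G : SimpleGraph V) (v w : V) :
    (L.foldl complementOn G).Adj v w ↔
      v ≠ w ∧ Xor (G.Adj v w) (membershipVector L v ⬝ᵥ membershipVector L w = 1) := by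
  induction L generalizing G with
  | nil =>
    simp only [membershipVector, dotProduct, List.length_nil, Finset.univ_eq_empty,
      Finset.sum_empty, zero_ne_one, xor_comm _ False, xor_false, id, List.foldl_nil]
    exact ⟨fun h => ⟨G.ne_of_adj h, h⟩, And.right⟩
  | cons S L ih =>
    rw [List.foldl_cons, ih, complementOn_adj, membershipVector_cons_dotProduct]
    have hS : v ∈ S ∧ w ∈ S ↔ S.indicator 1 v * S.indicator 1 w = (1 : ZMod 2) := by
      by_cases hv : v ∈ S <;> by_cases hw : w ∈ S <;> simp [hv, hw]
    rw [hS, ← ZMod.xor_eq_one_iff_add_eq_one]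
    simp only [xor_def]
    tauto

theorem stmt11_general {V : Type*} (k : ℕ) (G : SimpleGraph V)
    (L : List (Set V)) (hL : L.length = k) :
    ∃ n : ℕ, n ≤ 2 ^ k ∧ ∃ (R : Fin n → Fin n → Prop) (p : V → Fin n),
      IsPattern R ∧ G.patternApply R p = L.foldl complementOn G := by
  subst hL
  let e : Fin (2 ^ L.length) ≃ (Fin L.length → ZMod 2) :=
    (Fintype.equivFinOfCardEq (by simp)).symm
  refine ⟨2 ^ L.length, le_rfl, fun a b => e a ⬝ᵥ e b = 1, e.symm ∘ membershipVector L,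
    (isPattern_dotProduct_eq_one _).comap e, ?_⟩
  rw [SimpleGraph.patternApply_comap G (fun a b => a ⬝ᵥ b = 1)]
  ext v w
  rw [SimpleGraph.patternApply_adj (isPattern_dotProduct_eq_one _).1, foldl_complementOn_adj]

/-- if `H` is obtained from `G` by successively complementing on `k`
subsets of `V(G)`, then there are a pattern `R` with at most `2^k` nodes and a partition
`(V_u)` of `V(G)` such that `H = G^R`. -/
theorem stmt11 {V : Type*} [Fintype V] (k : ℕ) (G : SimpleGraph V)
    (L : List (Set V)) (hL : L.length = k) :
    ∃ n : ℕ, n ≤ 2 ^ k ∧ ∃ (R : Fin n → Fin n → Prop) (p : V → Fin n),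
      IsPattern R ∧ G.patternApply R p = L.foldl complementOn G :=
  stmt11_general k G L hL
end

section
/- Let G be a finite simple graph with maximum degree at most d, R a graph possibly with loops, and (V_u)_{u∈V(R)} a partition of V(G). Then any two vertices v and v' contained in the same part V_u satisfy |deg_{G^R}(v) − deg_{G^R}(v')| ≤ 2d. -/
theorem Set.natAbs_ncard_sub_ncard_le {α : Type*} {s t : Set α} {k : ℕ}
    (hst : (s \ t).ncard ≤ k) (hts : (t \ s).ncard ≤ k)
    (hs : s.Finite := by toFinite_tac) (ht : t.Finite := by toFinite_tac) :
    ((s.ncard : ℤ) - t.ncard).natAbs ≤ k := by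
  have h₁ := Set.ncard_le_ncard_sdiff_add_ncard s t ht
  have h₂ := Set.ncard_le_ncard_sdiff_add_ncard t s hs
  omega

theorem SimpleGraph.ncard_neighborSet_sub_ncard_neighborSet {V : Type*} [Finite V]
    (H : SimpleGraph V) (x y : V) :
    ((H.neighborSet x).ncard : ℤ) - (H.neighborSet y).ncard =
      ((H.neighborSet x \ {y}).ncard : ℤ) - (H.neighborSet y \ {x}).ncard := by
  by_cases hxy : y ∈ H.neighborSet x
  · have hyx : x ∈ H.neighborSet y := H.adj_symm hxy
    have hx : 0 < (H.neighborSet x).ncard := (Set.ncard_pos (Set.toFinite _)).mpr ⟨y, hxy⟩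
    have hy : 0 < (H.neighborSet y).ncard := (Set.ncard_pos (Set.toFinite _)).mpr ⟨x, hyx⟩
    rw [Set.ncard_sdiff_singleton_of_mem hxy, Set.ncard_sdiff_singleton_of_mem hyx]
    omega
  · have hyx : x ∉ H.neighborSet y := fun h ↦ hxy (H.adj_symm h)
    rw [Set.sdiff_singleton_eq_self hxy, Set.sdiff_singleton_eq_self hyx]

namespace SimpleGraph

variable {V ι : Type*} (G : SimpleGraph V) (R : ι → ι → Prop) (p : V → ι)

theorem patternApply_neighborSet_sdiff_subset {x y : V} (hxy : p x = p y) :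
    ((G.patternApply R p).neighborSet x \ {y}) \ ((G.patternApply R p).neighborSet y \ {x}) ⊆
      G.neighborSet x ∪ G.neighborSet y := by
  rintro w ⟨⟨⟨hxw, hadj⟩, hwy⟩, hnot⟩
  by_contra hG
  simp only [Set.mem_union, mem_neighborSet, not_or] at hG
  have hR : R (p x) (p w) ∨ R (p w) (p x) := hadj.elim (fun h ↦ absurd h.1 hG.1) And.left
  exact hnot ⟨⟨fun h ↦ hwy h.symm, Or.inr ⟨hxy ▸ hR, hG.2⟩⟩, fun h ↦ hxw h.symm⟩

theorem ncard_patternApply_neighborSet_sdiff_le [Finite V] {d : ℕ}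
    (hdeg : ∀ v : V, (G.neighborSet v).ncard ≤ d) {x y : V} (hxy : p x = p y) :
    (((G.patternApply R p).neighborSet x \ {y}) \
      ((G.patternApply R p).neighborSet y \ {x})).ncard ≤ 2 * d :=
  calc _ ≤ (G.neighborSet x ∪ G.neighborSet y).ncard :=
        Set.ncard_le_ncard (G.patternApply_neighborSet_sdiff_subset R p hxy)
    _ ≤ (G.neighborSet x).ncard + (G.neighborSet y).ncard := Set.ncard_union_le _ _
    _ ≤ 2 * d := by linarith [hdeg x, hdeg y]

end SimpleGraph

theorem stmt13_general {V ι : Type*} [Fintype V] (G : SimpleGraph V) (d : ℕ)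
    (hdeg : ∀ v : V, (G.neighborSet v).ncard ≤ d)
    (R : ι → ι → Prop) (p : V → ι)
    (v v' : V) (h : p v = p v') :
    ((((G.patternApply R p).neighborSet v).ncard : ℤ) -
        (((G.patternApply R p).neighborSet v').ncard : ℤ)).natAbs ≤ 2 * d := by
  rw [SimpleGraph.ncard_neighborSet_sub_ncard_neighborSet]
  exact Set.natAbs_ncard_sub_ncard_le
    (G.ncard_patternApply_neighborSet_sdiff_le R p hdeg h)
    (G.ncard_patternApply_neighborSet_sdiff_le R p hdeg h.symm)

/-- if `G` has maximum degree at most `d`, then any two vertices lying in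
the same part of the partition have degrees in `G^R` differing by at most `2d`. -/
theorem stmt13 {V ι : Type*} [Fintype V] (G : SimpleGraph V) (d : ℕ)
    (hdeg : ∀ v : V, (G.neighborSet v).ncard ≤ d)
    (R : ι → ι → Prop) (hR : Symmetric R) (p : V → ι)
    (v v' : V) (h : p v = p v') :
    ((((G.patternApply R p).neighborSet v).ncard : ℤ) -
        (((G.patternApply R p).neighborSet v').ncard : ℤ)).natAbs ≤ 2 * d :=
  stmt13_general G d hdeg R p v v' h
end
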